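/- arXiv:physics/9702015 — 5 statements merged into one kernel-verified Lean document; each statement's English description precedes it below -/
import Mathlib

section
/- Fix natural numbers m, n, r and a nonzero complex constant c, and set c_k = ((m+k)!·(n+1)!/((n+k)!·(m+1)!))·c for 1 ≤ k ≤ r. Then the span of the vectors z^i·v₁ (0 ≤ i ≤ m), z^j·v₂ (0 ≤ j ≤ n), and z^k(z^m·v₁ + c_k·z^n·v₂) (1 ≤ k ≤ r) inside C[z] ⊗ V is invariant under ∂_z (acting on the polynomial factor). -/
open Polynomial

/-- The coefficients `c_k = ((m+k)!·(n+1)!/((n+k)!·(m+1)!))·c`. -/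
noncomputable def ck (m n : ℕ) (c : ℂ) (k : ℕ) : ℂ :=
  ((Nat.factorial (m + k) : ℂ) * (Nat.factorial (n + 1) : ℂ)) /
    ((Nat.factorial (n + k) : ℂ) * (Nat.factorial (m + 1) : ℂ)) * c

/-- Generators of the translation bimodule `m₀(V)` inside `ℂ[z] ⊗ V ≅ ℂ[z] × ℂ[z]`:
`z^i v₁` for `i ≤ m`, `z^j v₂` for `j ≤ n`, and the mixed vectors
`z^k(z^m v₁ + c_k z^n v₂)` for `1 ≤ k ≤ r`. -/
def bimodGens (m n r : ℕ) (c : ℂ) : Set (Polynomial ℂ × Polynomial ℂ) :=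
  {w | (∃ i ≤ m, w = ((X : Polynomial ℂ) ^ i, 0)) ∨
       (∃ j ≤ n, w = (0, (X : Polynomial ℂ) ^ j)) ∨
       (∃ k, 1 ≤ k ∧ k ≤ r ∧
         w = ((X : Polynomial ℂ) ^ (m + k), ck m n c k • (X : Polynomial ℂ) ^ (n + k)))}

lemma fact_ne (x : ℕ) : (Nat.factorial x : ℂ) ≠ 0 :=
  Nat.cast_ne_zero.mpr (Nat.factorial_ne_zero x)

/-- key recursion: c_{k+1}·(n+k+1) = (m+k+1)·c_k -/
lemma ck_rec (m n : ℕ) (c : ℂ) (k : ℕ) :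
    ck m n c (k + 1) * ((n : ℂ) + (k : ℂ) + 1) = ((m : ℂ) + (k : ℂ) + 1) * ck m n c k := by
  unfold ck
  have h1 : (Nat.factorial (m + (k + 1)) : ℂ) = ((m : ℂ) + k + 1) * Nat.factorial (m + k) := by
    have : m + (k + 1) = (m + k) + 1 := by ring
    rw [this, Nat.factorial_succ]
    push_cast; ring
  have h2 : (Nat.factorial (n + (k + 1)) : ℂ) = ((n : ℂ) + k + 1) * Nat.factorial (n + k) := by
    have : n + (k + 1) = (n + k) + 1 := by ring
    rw [this, Nat.factorial_succ]
    push_cast; ring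
  rw [h1, h2]
  have hn : ((n : ℂ) + k + 1) ≠ 0 := by
    have : ((n + k + 1 : ℕ) : ℂ) ≠ 0 := Nat.cast_ne_zero.mpr (Nat.succ_ne_zero _)
    push_cast at this; convert this using 2 <;> ring
  field_simp [fact_ne (n+k), fact_ne (m+1), hn]

/-- The span of the generators of `m₀(V)` is invariant under `∂_z`. -/
theorem stmt9 (m n r : ℕ) (c : ℂ) (hc : c ≠ 0) :
    ∀ w ∈ Submodule.span ℂ (bimodGens m n r c),
      (derivative w.1, derivative w.2) ∈ Submodule.span ℂ (bimodGens m n r c) := by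
  set S := bimodGens m n r c with hS
  set D : (Polynomial ℂ × Polynomial ℂ) →ₗ[ℂ] (Polynomial ℂ × Polynomial ℂ) :=
    (derivative : Polynomial ℂ →ₗ[ℂ] Polynomial ℂ).prodMap derivative with hD
  have key : ∀ w ∈ S, D w ∈ Submodule.span ℂ S := by
    intro w hw
    rcases hw with ⟨i, hi, rfl⟩ | ⟨j, hj, rfl⟩ | ⟨k, hk1, hkr, rfl⟩
    · -- (X^i, 0)
      simp only [hD, LinearMap.prodMap_apply, LinearEquiv.coe_coe,
        Prod.map_apply, LinearMap.coe_mk, derivative_zero, derivative_X_pow]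
      cases i with
      | zero => simpa [Prod.mk_zero_zero] using (Submodule.span ℂ S).zero_mem
      | succ i' =>
        have : ((C ((i' + 1 : ℕ) : ℂ) * X ^ (i' + 1 - 1) : Polynomial ℂ), (0 : Polynomial ℂ))
            = ((i' + 1 : ℕ) : ℂ) • ((X : Polynomial ℂ) ^ i', 0) := by
          simp [Prod.smul_mk, smul_eq_C_mul]
        rw [this]
        exact Submodule.smul_mem _ _ (Submodule.subset_span
          (Or.inl ⟨i', le_trans (Nat.le_succ i') hi, rfl⟩))
    · simp only [hD, LinearMap.prodMap_apply, LinearEquiv.coe_coe,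
        Prod.map_apply, LinearMap.coe_mk, derivative_zero, derivative_X_pow]
      cases j with
      | zero => simpa [Prod.mk_zero_zero] using (Submodule.span ℂ S).zero_mem
      | succ j' =>
        have : ((0 : Polynomial ℂ), (C ((j' + 1 : ℕ) : ℂ) * X ^ (j' + 1 - 1) : Polynomial ℂ))
            = ((j' + 1 : ℕ) : ℂ) • ((0 : Polynomial ℂ), (X : Polynomial ℂ) ^ j') := by
          simp [Prod.smul_mk, smul_eq_C_mul]
        rw [this]
        exact Submodule.smul_mem _ _ (Submodule.subset_span
          (Or.inr (Or.inl ⟨j', le_trans (Nat.le_succ j') hj, rfl⟩)))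
    · -- mixed vector
      simp only [hD, LinearMap.prodMap_apply, LinearEquiv.coe_coe,
        Prod.map_apply, derivative_smul, derivative_X_pow]
      obtain ⟨k', rfl⟩ := Nat.exists_eq_add_of_le hk1
      cases k' with
      | zero =>
        -- k = 1
        have heq : ((C ((m + 1 : ℕ) : ℂ) * X ^ (m + 1 - 1) : Polynomial ℂ),
              ck m n c 1 • (C ((n + 1 : ℕ) : ℂ) * X ^ (n + 1 - 1) : Polynomial ℂ))
            = ((m + 1 : ℕ) : ℂ) • ((X : Polynomial ℂ) ^ m, 0)
              + (ck m n c 1 * ((n + 1 : ℕ) : ℂ)) • ((0 : Polynomial ℂ), (X : Polynomial ℂ) ^ n) := by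
          simp only [Prod.smul_mk, Prod.mk_add_mk, smul_zero, add_zero, zero_add,
            smul_eq_C_mul, smul_smul, Prod.mk.injEq, Nat.add_sub_cancel]
          exact ⟨trivial, by rw [← mul_assoc, ← map_mul]⟩
        rw [show (1 : ℕ) = 0 + 1 from rfl] at heq ⊢
        rw [heq]
        exact Submodule.add_mem _
          (Submodule.smul_mem _ _ (Submodule.subset_span (Or.inl ⟨m, le_refl m, rfl⟩)))
          (Submodule.smul_mem _ _ (Submodule.subset_span (Or.inr (Or.inl ⟨n, le_refl n, rfl⟩))))
      | succ k'' =>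
        -- k = k'' + 2, write derivative as (m + k'' + 2) • (generator at k''+1)
        set k := k'' + 1 with hkdef
        have hrec := ck_rec m n c k
        have heq : ((C ((m + (1 + (k'' + 1)) : ℕ) : ℂ) * X ^ (m + (1 + (k'' + 1)) - 1) : Polynomial ℂ),
              ck m n c (1 + (k'' + 1)) • (C ((n + (1 + (k'' + 1)) : ℕ) : ℂ) * X ^ (n + (1 + (k'' + 1)) - 1) : Polynomial ℂ))
            = (((m : ℂ) + k + 1)) • ((X : Polynomial ℂ) ^ (m + k),
                ck m n c k • (X : Polynomial ℂ) ^ (n + k)) := by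
          have e1 : 1 + (k'' + 1) = k + 1 := by omega
          have e2 : m + (k + 1) - 1 = m + k := by omega
          have e3 : n + (k + 1) - 1 = n + k := by omega
          rw [e1, e2, e3]
          simp only [Prod.smul_mk, smul_eq_C_mul, smul_smul, Prod.mk.injEq]
          have hcm : ((m + (k + 1) : ℕ) : ℂ) = (m : ℂ) + k + 1 := by push_cast; ring
          have hcn : ((n + (k + 1) : ℕ) : ℂ) = (n : ℂ) + k + 1 := by push_cast; ring
          constructor
          · rw [hcm]
          · rw [hcn, ← mul_assoc, ← map_mul, hrec, map_mul, mul_assoc]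
        rw [heq]
        refine Submodule.smul_mem _ _ (Submodule.subset_span (Or.inr (Or.inr ⟨k, ?_, ?_, rfl⟩)))
        · omega
        · omega
  intro w hw
  have : D w ∈ Submodule.span ℂ S := by
    refine Submodule.span_induction key (by simp) ?_ ?_ hw
    · intro x y _ _ hx hy; rw [map_add]; exact Submodule.add_mem _ hx hy
    · intro a x _ hx; rw [map_smul]; exact Submodule.smul_mem _ _ hx
  simpa [hD] using this
end

section
/- Let W ⊆ C[z] ⊗ V be a finite-dimensional subspace invariant under ∂_z that contains a 'mixed' vector of the form z^{m+1}·v₁ + Σ_{j} d_j z^{n+j}·v₂ (with d₁ ≠ 0) but contains z^i v₁ only for i ≤ m and z^j v₂ only for j ≤ n. Then applying ∂_z and subtracting known elements forces the coefficients of any mixed vector z^{m+k} v₁ + Σ_{j=1}^{k} c^k_j z^{n+j} v₂ in W to satisfy the recursion c^k_j = ((m+k)!(n+1)!)/((n+j)!(m+k−j+1)!)·c^{k−j+1} for some constants c^1,…,c^r with c^1 ≠ 0. -/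
open Polynomial

/-!
A derivative-closed subspace of `K[X]` (characteristic zero) containing `Q ≠ 0` contains every
`X ^ i` with `i ≤ natDegree Q`: the derivative supplies the lower powers, and subtracting them
isolates the leading monomial. So every `(0, Q) ∈ W` has `natDegree Q ≤ n`, and the coefficients
above `z ^ n` of a mixed vector of `W` depend only on its first component `z ^ p`; call the one of
`z ^ (n + 1)` for `p = m + l` the constant `c^l`. Differentiating a mixed vector with first
component `z ^ (m + k)` and dividing by `m + k` gives one with first component `z ^ (m + k - 1)`,
whence `(n + j) c^k_j = (m + k) c^{k-1}_{j-1}`; descending to `j = 1` gives the factorial formula,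
and `c^1 = d₁ ≠ 0`.
-/

namespace Polynomial

variable {K : Type*} [Field K] [CharZero K]

theorem X_pow_mem_of_le_natDegree {S : Submodule K K[X]} (hS : ∀ p ∈ S, derivative p ∈ S)
    {Q : K[X]} (hQ : Q ∈ S) (hQ0 : Q ≠ 0) {i : ℕ} (hi : i ≤ Q.natDegree) : X ^ i ∈ S := by
  induction hD : Q.natDegree generalizing Q i with
  | zero =>
    obtain rfl : i = 0 := by omega
    obtain ⟨c, rfl⟩ := natDegree_eq_zero.mp hD
    have hc : c ≠ 0 := by rintro rfl; exact hQ0 C_0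
    simpa [smul_C, hc] using S.smul_mem c⁻¹ hQ
  | succ D ih =>
    have hD' : (derivative Q).natDegree = D := by simp [hD]
    have hlow : ∀ i ≤ D, X ^ i ∈ S := fun i hi =>
      ih (hS Q hQ) (derivative_ne_zero.mpr (by omega)) (hD' ▸ hi) hD'
    have hlead : X ^ (D + 1) ∈ S := by
      have herase : Q.eraseLead ∈ S := by
        have hspan : degreeLT K (D + 1) ≤ S := by
          classical
          rw [degreeLT_eq_span_X_pow, Submodule.span_le]
          simpa [Set.subset_def, Nat.lt_succ_iff] using hlow
        apply hspan
        rw [mem_degreeLT, ← hD, ← degree_eq_natDegree hQ0]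
        exact degree_eraseLead_lt hQ0
      have := S.smul_mem Q.leadingCoeff⁻¹ (S.sub_mem hQ herase)
      rwa [← self_sub_C_mul_X_pow, sub_sub_cancel, hD, smul_eq_C_mul, ← mul_assoc, ← C_mul,
        inv_mul_cancel₀ (leadingCoeff_ne_zero.mpr hQ0), C_1, one_mul] at this
    rcases (hi.trans_eq hD).lt_or_eq with hi | rfl
    · exact hlow i (Nat.le_of_lt_succ hi)
    · exact hlead

theorem coeff_sum_smul_X_pow_add {R : Type*} [Semiring R] (c : ℕ → R) (s : Finset ℕ) (n : ℕ)
    {j : ℕ} (hj : j ∈ s) : (∑ i ∈ s, c i • (X : R[X]) ^ (n + i)).coeff (n + j) = c j := by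
  simp [coeff_X_pow, hj]

end Polynomial

open Nat

theorem factorial_ratio_succ_succ {K : Type*} [Field K] {m n k j : ℕ} (hjk : j ≤ k) :
    ((m + (k + 1))! * (n + 1)! : K) / ((n + (j + 1))! * (m + (k + 1) - (j + 1) + 1)!) =
      (m + k + 1) / (n + j + 1) * ((m + k)! * (n + 1)! / ((n + j)! * (m + k - j + 1)!)) := by
  rw [show m + (k + 1) - (j + 1) = m + k - j by omega, ← add_assoc, ← add_assoc,
    factorial_succ (m + k), factorial_succ (n + j)]
  push_cast
  field_simp

section

variable {K : Type*} [Field K] [CharZero K] {W : Submodule K (K[X] × K[X])} {m n : ℕ}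

theorem natDegree_le_of_zero_prod_mem (hW : ∀ w ∈ W, (derivative w.1, derivative w.2) ∈ W)
    (hpow : ∀ j : ℕ, ((0 : K[X]), (X : K[X]) ^ j) ∈ W → j ≤ n) {Q : K[X]}
    (hQ : (0, Q) ∈ W) : Q.natDegree ≤ n := by
  rcases eq_or_ne Q 0 with rfl | hQ0
  · simp
  · exact hpow _ (X_pow_mem_of_le_natDegree (S := W.comap (LinearMap.inr K K[X] K[X]))
      (fun p hp => by simpa using hW _ hp) hQ hQ0 le_rfl)

theorem coeff_eq_of_prod_mem (hW : ∀ w ∈ W, (derivative w.1, derivative w.2) ∈ W)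
    (hpow : ∀ j : ℕ, ((0 : K[X]), (X : K[X]) ^ j) ∈ W → j ≤ n) {P Q Q' : K[X]}
    (h : (P, Q) ∈ W) (h' : (P, Q') ∈ W) {i : ℕ} (hi : n < i) : Q.coeff i = Q'.coeff i := by
  have hdiff : ((0 : K[X]), Q - Q') ∈ W := by simpa using W.sub_mem h h'
  rw [← sub_eq_zero, ← coeff_sub]
  exact coeff_eq_zero_of_natDegree_lt ((natDegree_le_of_zero_prod_mem hW hpow hdiff).trans_lt hi)

theorem X_pow_prod_derivative_mem (hW : ∀ w ∈ W, (derivative w.1, derivative w.2) ∈ W)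
    {p : ℕ} {Q : K[X]} (h : (X ^ (p + 1), Q) ∈ W) :
    (X ^ p, ((p + 1 : K))⁻¹ • derivative Q) ∈ W := by
  have hp : (p + 1 : K) ≠ 0 := Nat.cast_add_one_ne_zero p
  have h' := W.smul_mem (p + 1 : K)⁻¹ (hW _ h)
  rwa [derivative_X_pow_succ, ← smul_eq_C_mul, Prod.smul_mk, smul_smul, inv_mul_cancel₀ hp,
    one_smul] at h'

open Classical in
noncomputable def partnerCoeff (W : Submodule K (K[X] × K[X])) (p i : ℕ) : K :=
  if h : ∃ Q, (X ^ p, Q) ∈ W then h.choose.coeff i else 0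

theorem coeff_eq_partnerCoeff (hW : ∀ w ∈ W, (derivative w.1, derivative w.2) ∈ W)
    (hpow : ∀ j : ℕ, ((0 : K[X]), (X : K[X]) ^ j) ∈ W → j ≤ n) {p i : ℕ} {Q : K[X]}
    (h : (X ^ p, Q) ∈ W) (hi : n < i) : Q.coeff i = partnerCoeff W p i := by
  have hex : ∃ Q, (X ^ p, Q) ∈ W := ⟨Q, h⟩
  rw [partnerCoeff, dif_pos hex]
  exact coeff_eq_of_prod_mem hW hpow h hex.choose_spec hi

theorem coeff_eq_factorial_ratio_mul_partnerCoeff {j : ℕ}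
    (hW : ∀ w ∈ W, (derivative w.1, derivative w.2) ∈ W)
    (hpow : ∀ j : ℕ, ((0 : K[X]), (X : K[X]) ^ j) ∈ W → j ≤ n) (hj : 1 ≤ j) :
    ∀ {k : ℕ} {Q : K[X]}, j ≤ k → (X ^ (m + k), Q) ∈ W →
      Q.coeff (n + j) = ((m + k)! * (n + 1)! : K) / ((n + j)! * (m + k - j + 1)!) *
        partnerCoeff W (m + (k - j + 1)) (n + 1) := by
  induction j, hj using Nat.le_induction with
  | base =>
    intro k Q hk h
    rw [coeff_eq_partnerCoeff hW hpow h (lt_add_one n), Nat.sub_add_cancel hk,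
      Nat.sub_add_cancel (by omega : 1 ≤ m + k), mul_comm ((n + 1)! : K),
      div_self (by simp [factorial_ne_zero]), one_mul]
  | succ j hj ih =>
    intro k Q hk h
    obtain ⟨k, rfl⟩ : ∃ k', k = k' + 1 := ⟨k - 1, by omega⟩
    have hd := ih (Nat.le_of_succ_le_succ hk) (X_pow_prod_derivative_mem hW h)
    rw [coeff_smul, coeff_derivative, smul_eq_mul] at hd
    rw [factorial_ratio_succ_succ (Nat.le_of_succ_le_succ hk),
      show k + 1 - (j + 1) = k - j by omega, mul_assoc, ← hd, ← add_assoc]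
    have hmk : (m + k + 1 : K) ≠ 0 := by exact_mod_cast succ_ne_zero (m + k)
    have hnj : (n + j + 1 : K) ≠ 0 := by exact_mod_cast succ_ne_zero (n + j)
    push_cast
    field_simp

end

theorem stmt10_general (m n : ℕ) (W : Submodule ℂ (Polynomial ℂ × Polynomial ℂ))
    (hinv : ∀ w ∈ W, (derivative w.1, derivative w.2) ∈ W)
    (hmix : ∃ s : ℕ, ∃ d : ℕ → ℂ, d 1 ≠ 0 ∧
      (((X : Polynomial ℂ) ^ (m + 1),
        ∑ j ∈ Finset.Icc 1 s, d j • (X : Polynomial ℂ) ^ (n + j)) ∈ W))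
    (hv1 : ∀ i : ℕ, ((X : Polynomial ℂ) ^ i, (0 : Polynomial ℂ)) ∈ W → i ≤ m)
    (hv2 : ∀ j : ℕ, ((0 : Polynomial ℂ), (X : Polynomial ℂ) ^ j) ∈ W → j ≤ n) :
    ∃ cseq : ℕ → ℂ, cseq 1 ≠ 0 ∧
      ∀ k : ℕ, 1 ≤ k → ∀ c' : ℕ → ℂ,
        (((X : Polynomial ℂ) ^ (m + k),
          ∑ j ∈ Finset.Icc 1 k, c' j • (X : Polynomial ℂ) ^ (n + j)) ∈ W) →
        ∀ j : ℕ, 1 ≤ j → j ≤ k →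
          c' j = ((Nat.factorial (m + k) : ℂ) * (Nat.factorial (n + 1) : ℂ)) /
              ((Nat.factorial (n + j) : ℂ) * (Nat.factorial (m + k - j + 1) : ℂ)) *
              cseq (k - j + 1) := by
  obtain ⟨s, d, hd1, hmix⟩ := hmix
  have hs : 1 ∈ Finset.Icc 1 s := by
    refine Finset.mem_Icc.mpr ⟨le_rfl, Nat.one_le_iff_ne_zero.mpr ?_⟩
    rintro rfl
    have := hv1 (m + 1) (by simpa using hmix)
    omega
  refine ⟨fun k => partnerCoeff W (m + k) (n + 1), ?_, fun k _ c hc j hj hjk => ?_⟩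
  · show partnerCoeff W (m + 1) (n + 1) ≠ 0
    rwa [← coeff_eq_partnerCoeff hinv hv2 hmix (lt_add_one n), coeff_sum_smul_X_pow_add d _ n hs]
  · rw [← coeff_sum_smul_X_pow_add c _ n (Finset.mem_Icc.mpr ⟨hj, hjk⟩)]
    exact coeff_eq_factorial_ratio_mul_partnerCoeff hinv hv2 hj hjk hc

/-- In a finite-dimensional `∂_z`-invariant subspace `W ⊆ ℂ[z] ⊗ V` containing a
mixed vector `z^{m+1}v₁ + Σ_j d_j z^{n+j}v₂` (`d₁ ≠ 0`) but containing `z^i v₁`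
only for `i ≤ m` and `z^j v₂` only for `j ≤ n`, the coefficients of any mixed
vector `z^{m+k}v₁ + Σ_{j=1}^k c^k_j z^{n+j}v₂ ∈ W` obey the recursion
`c^k_j = ((m+k)!(n+1)!)/((n+j)!(m+k−j+1)!)·c^{k−j+1}` for constants `c^1, …`
with `c^1 ≠ 0`. -/
theorem stmt10 (m n : ℕ) (W : Submodule ℂ (Polynomial ℂ × Polynomial ℂ))
    (hfd : FiniteDimensional ℂ W)
    (hinv : ∀ w ∈ W, (derivative w.1, derivative w.2) ∈ W)
    (hmix : ∃ s : ℕ, ∃ d : ℕ → ℂ, d 1 ≠ 0 ∧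
      (((X : Polynomial ℂ) ^ (m + 1),
        ∑ j ∈ Finset.Icc 1 s, d j • (X : Polynomial ℂ) ^ (n + j)) ∈ W))
    (hv1 : ∀ i : ℕ, ((X : Polynomial ℂ) ^ i, (0 : Polynomial ℂ)) ∈ W → i ≤ m)
    (hv2 : ∀ j : ℕ, ((0 : Polynomial ℂ), (X : Polynomial ℂ) ^ j) ∈ W → j ≤ n) :
    ∃ cseq : ℕ → ℂ, cseq 1 ≠ 0 ∧
      ∀ k : ℕ, 1 ≤ k → ∀ c' : ℕ → ℂ,
        (((X : Polynomial ℂ) ^ (m + k),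
          ∑ j ∈ Finset.Icc 1 k, c' j • (X : Polynomial ℂ) ^ (n + j)) ∈ W) →
        ∀ j : ℕ, 1 ≤ j → j ≤ k →
          c' j = ((Nat.factorial (m + k) : ℂ) * (Nat.factorial (n + 1) : ℂ)) /
              ((Nat.factorial (n + j) : ℂ) * (Nat.factorial (m + k - j + 1) : ℂ)) *
              cseq (k - j + 1) :=
  stmt10_general m n W hinv hmix hv1 hv2
end

section
/- For 2β = −p and 2(α+β) = −q (p, q natural numbers), the even operators ∂_z, z∂_z + αθ∂_θ + β, z²∂_z + 2αzθ∂_θ + 2βz preserve the module n^{3.3} = span{ z^j : 0 ≤ j ≤ p } ⊕ span{ z^k θ : 0 ≤ k ≤ q } of Λ¹-valued polynomials. -/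
/-!
On coefficients, `z∂_z + c` acts diagonally, `z^k ↦ (k + c) z^k`, so it preserves every
`degreeLE`. The lowering-raising operator factors as `z² ∂_z + d z = z (z ∂_z + d)`, which sends
`z^k ↦ (k + d) z^(k+1)`; it can only raise the degree bound `n` through `z^n`, and that monomial is
killed exactly when `n + d = 0`. The conditions `2β = -p` and `2(α + β) = -q` are this condition
for the even and odd components.
-/

open Polynomial

namespace Polynomial

variable {R : Type*} [CommSemiring R]

theorem coeff_X_mul_derivative_add_smul (f : R[X]) (c : R) (k : ℕ) :
    (X * derivative f + c • f).coeff k = (k + c) * f.coeff k := by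
  cases k with
  | zero => simp
  | succ k =>
    simp only [coeff_add, coeff_X_mul, coeff_derivative, coeff_smul, smul_eq_mul]
    push_cast
    ring

theorem X_sq_mul_derivative_add_smul_X_mul (f : R[X]) (d : R) :
    X ^ 2 * derivative f + d • (X * f) = X * (X * derivative f + d • f) := by
  rw [mul_add, mul_smul_comm, ← mul_assoc, ← pow_two]

theorem X_mul_derivative_add_smul_mem_degreeLE {n : ℕ} {f : R[X]} (hf : f ∈ degreeLE R n)
    (c : R) : X * derivative f + c • f ∈ degreeLE R n := by
  rw [mem_degreeLE, degree_le_iff_coeff_zero] at hf ⊢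
  intro k hk
  rw [coeff_X_mul_derivative_add_smul, hf k hk, mul_zero]

theorem X_sq_mul_derivative_add_smul_X_mul_mem_degreeLE {n : ℕ} {f : R[X]}
    (hf : f ∈ degreeLE R n) {d : R} (hd : (n : R) + d = 0) :
    X ^ 2 * derivative f + d • (X * f) ∈ degreeLE R n := by
  rw [mem_degreeLE, degree_le_iff_coeff_zero] at hf ⊢
  rw [X_sq_mul_derivative_add_smul_X_mul]
  rintro (_ | k) hk
  · exact coeff_X_mul_zero _
  · rw [coeff_X_mul, coeff_X_mul_derivative_add_smul]
    have hnk : n ≤ k := Nat.lt_succ_iff.mp (by exact_mod_cast hk)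
    rcases hnk.eq_or_lt with rfl | hlt
    · rw [hd, zero_mul]
    · rw [hf k (by exact_mod_cast hlt), mul_zero]

end Polynomial

/-- For `2β = −p` and `2(α+β) = −q`, the even operators `∂_z`, `z∂_z + αθ∂_θ + β`,
`z²∂_z + 2αzθ∂_θ + 2βz` preserve the module `n^{3.3}` of pairs `(f, g)` (modeling
`f + gθ`) with `deg f ≤ p`, `deg g ≤ q`. -/
theorem stmt12 (α β : ℂ) (p q : ℕ) (hβ : 2 * β = -(p : ℂ))
    (hαβ : 2 * (α + β) = -(q : ℂ)) :
    ∀ f g : Polynomial ℂ,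
      f ∈ Polynomial.degreeLE ℂ (p : WithBot ℕ) →
      g ∈ Polynomial.degreeLE ℂ (q : WithBot ℕ) →
      (derivative f ∈ Polynomial.degreeLE ℂ (p : WithBot ℕ) ∧
        derivative g ∈ Polynomial.degreeLE ℂ (q : WithBot ℕ)) ∧
      (X * derivative f + β • f ∈ Polynomial.degreeLE ℂ (p : WithBot ℕ) ∧
        X * derivative g + (α + β) • g ∈ Polynomial.degreeLE ℂ (q : WithBot ℕ)) ∧
      (X ^ 2 * derivative f + (2 * β) • (X * f) ∈ Polynomial.degreeLE ℂ (p : WithBot ℕ) ∧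
        X ^ 2 * derivative g + (2 * α + 2 * β) • (X * g) ∈
          Polynomial.degreeLE ℂ (q : WithBot ℕ)) := by
  intro f g hf hg
  have hp : (p : ℂ) + 2 * β = 0 := by rw [hβ, add_neg_cancel]
  have hq : (q : ℂ) + (2 * α + 2 * β) = 0 := by rw [← mul_add, hαβ, add_neg_cancel]
  refine ⟨⟨?_, ?_⟩, ⟨?_, ?_⟩, ?_, ?_⟩
  · exact mem_degreeLE.mpr (degree_derivative_le.trans (mem_degreeLE.mp hf))
  · exact mem_degreeLE.mpr (degree_derivative_le.trans (mem_degreeLE.mp hg))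
  · exact X_mul_derivative_add_smul_mem_degreeLE hf β
  · exact X_mul_derivative_add_smul_mem_degreeLE hg (α + β)
  · exact X_sq_mul_derivative_add_smul_X_mul_mem_degreeLE hf hp
  · exact X_sq_mul_derivative_add_smul_X_mul_mem_degreeLE hg hq
end

section
/- With 2α = 1 and −2β = p = q + 1 (p ≥ 1 natural), the osp(2,2) generators θz∂_z + z∂_θ + 2βθ, θ∂_z + ∂_θ, z∂_θ, ∂_θ, together with ∂_z, z∂_z + ½θ∂_θ + β, z²∂_z + zθ∂_θ + 2βz, all preserve the module span{z^j : 0 ≤ j ≤ p} ⊕ span{z^kθ : 0 ≤ k ≤ q} of pairs (f,g) with deg f ≤ p = q+1 and deg g ≤ q. -/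
/-!
Multiplication by `z` raises the degree bound by one and `∂_z` lowers it by one, so the only
danger comes from top coefficients. These are killed by the Euler operator `z∂_z - n`, which
annihilates the coefficient of `z^n`: since `2β = -p = -(q + 1)`, the `θ`-component of `Q₁` is
`(z∂_z - p) f`, and `J⁺` acts as `z (z∂_z - p)` on `f` and as `z (z∂_z - q)` on `g`.
-/

open Polynomial

namespace Polynomial

section Semiring

variable {R : Type*} [Semiring R] {n : ℕ} {f : R[X]}

theorem degreeLT_le_degreeLE (n : ℕ) : degreeLT R n ≤ degreeLE R n := by
  rw [← degreeLT_succ_eq_degreeLE]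
  exact degreeLT_mono n.le_succ

theorem X_mul_mem_degreeLE_of_mem_degreeLT (hf : f ∈ degreeLT R n) : X * f ∈ degreeLE R n := by
  rw [mem_degreeLT, degree_lt_iff_coeff_zero] at hf
  rw [mem_degreeLE, degree_le_iff_coeff_zero]
  rintro (_ | k) hk <;> norm_cast at hk
  rw [coeff_X_mul]
  exact hf k (by omega)

theorem derivative_mem_degreeLT (hf : f ∈ degreeLE R n) : derivative f ∈ degreeLT R n := by
  rcases eq_or_ne f 0 with rfl | hf0
  · simp
  rw [mem_degreeLE] at hf
  exact mem_degreeLT.mpr ((degree_derivative_lt hf0).trans_le hf)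

theorem X_mul_derivative_mem_degreeLE (hf : f ∈ degreeLE R n) :
    X * derivative f ∈ degreeLE R n :=
  X_mul_mem_degreeLE_of_mem_degreeLT (derivative_mem_degreeLT hf)

theorem coeff_X_mul_derivative (f : R[X]) (m : ℕ) :
    (X * derivative f).coeff m = m * f.coeff m := by
  cases m with
  | zero => simp [mul_coeff_zero]
  | succ k => rw [coeff_X_mul, coeff_derivative, ← Nat.cast_succ, Nat.cast_comm]

end Semiring

theorem X_mul_derivative_sub_smul_mem_degreeLT {R : Type*} [Ring R] {n : ℕ} {f : R[X]}
    (hf : f ∈ degreeLE R n) : X * derivative f - (n : R) • f ∈ degreeLT R n := by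
  rw [mem_degreeLE, degree_le_iff_coeff_zero] at hf
  rw [mem_degreeLT, degree_lt_iff_coeff_zero]
  intro m hm
  rw [coeff_sub, coeff_smul, coeff_X_mul_derivative, smul_eq_mul, ← sub_mul]
  rcases hm.eq_or_lt with rfl | hlt
  · rw [sub_self, zero_mul]
  · rw [hf m (by exact_mod_cast hlt), mul_zero]

end Polynomial

/-- With `2α = 1` and `−2β = p = q + 1`, the `osp(2,2)` generators
`θz∂_z + z∂_θ + 2βθ`, `θ∂_z + ∂_θ`, `z∂_θ`, `∂_θ`, `∂_z`, `z∂_z + ½θ∂_θ + β`,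
`z²∂_z + zθ∂_θ + 2βz` all preserve the module of pairs `(f, g)` (modeling
`f + gθ`) with `deg f ≤ p` and `deg g ≤ q`. -/
theorem stmt14 (p q : ℕ) (β : ℂ) (hpq : p = q + 1) (hβ : 2 * β = -(p : ℂ)) :
    ∀ f g : Polynomial ℂ,
      f ∈ Polynomial.degreeLE ℂ (p : WithBot ℕ) →
      g ∈ Polynomial.degreeLE ℂ (q : WithBot ℕ) →
      -- Q₁ = θz∂_z + z∂_θ + 2βθ
      (X * g ∈ Polynomial.degreeLE ℂ (p : WithBot ℕ) ∧
        X * derivative f + (2 * β) • f ∈ Polynomial.degreeLE ℂ (q : WithBot ℕ)) ∧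
      -- Q₂ = θ∂_z + ∂_θ
      (g ∈ Polynomial.degreeLE ℂ (p : WithBot ℕ) ∧
        derivative f ∈ Polynomial.degreeLE ℂ (q : WithBot ℕ)) ∧
      -- R₁ = z∂_θ
      (X * g ∈ Polynomial.degreeLE ℂ (p : WithBot ℕ)) ∧
      -- R₂ = ∂_θ
      (g ∈ Polynomial.degreeLE ℂ (p : WithBot ℕ)) ∧
      -- J⁻ = ∂_z
      (derivative f ∈ Polynomial.degreeLE ℂ (p : WithBot ℕ) ∧
        derivative g ∈ Polynomial.degreeLE ℂ (q : WithBot ℕ)) ∧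
      -- J⁰ = z∂_z + ½θ∂_θ + β
      (X * derivative f + β • f ∈ Polynomial.degreeLE ℂ (p : WithBot ℕ) ∧
        X * derivative g + ((1 / 2 : ℂ) + β) • g ∈
          Polynomial.degreeLE ℂ (q : WithBot ℕ)) ∧
      -- J⁺ = z²∂_z + zθ∂_θ + 2βz
      (X ^ 2 * derivative f + (2 * β) • (X * f) ∈ Polynomial.degreeLE ℂ (p : WithBot ℕ) ∧
        X ^ 2 * derivative g + X * g + (2 * β) • (X * g) ∈
          Polynomial.degreeLE ℂ (q : WithBot ℕ)) := by
  intro f g hf hg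
  subst hpq
  have hβ' : 2 * β = -((q : ℂ) + 1) := by rw [hβ]; push_cast; ring
  have hg_lt : g ∈ degreeLT ℂ (q + 1) := by rwa [degreeLT_succ_eq_degreeLE]
  have hXg : X * g ∈ degreeLE ℂ ↑(q + 1) := X_mul_mem_degreeLE_of_mem_degreeLT hg_lt
  have hgp : g ∈ degreeLE ℂ ↑(q + 1) := degreeLT_le_degreeLE _ hg_lt
  have hf' : derivative f ∈ degreeLE ℂ q := by
    rw [← degreeLT_succ_eq_degreeLE]
    exact derivative_mem_degreeLT hf
  have hEuler_f := X_mul_derivative_sub_smul_mem_degreeLT hf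
  have hEuler_g := X_mul_derivative_sub_smul_mem_degreeLT hg
  refine ⟨⟨hXg, ?_⟩, ⟨hgp, hf'⟩, hXg, hgp, ⟨?_, ?_⟩, ⟨?_, ?_⟩, ⟨?_, ?_⟩⟩
  · rw [← degreeLT_succ_eq_degreeLE]
    convert hEuler_f using 1
    rw [hβ, sub_eq_add_neg, neg_smul]
  · exact degreeLT_le_degreeLE _ (derivative_mem_degreeLT hf)
  · exact degreeLT_le_degreeLE _ (derivative_mem_degreeLT hg)
  · exact add_mem (X_mul_derivative_mem_degreeLE hf) (Submodule.smul_mem _ _ hf)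
  · exact add_mem (X_mul_derivative_mem_degreeLE hg) (Submodule.smul_mem _ _ hg)
  · convert X_mul_mem_degreeLE_of_mem_degreeLT hEuler_f using 1
    simp only [smul_eq_C_mul, hβ, map_neg]
    ring
  · convert X_mul_mem_degreeLE_of_mem_degreeLT hEuler_g using 1
    simp only [smul_eq_C_mul, hβ', map_neg, map_add, map_one]
    ring
end

section
/- Suppose a Lie superalgebra s of differential operators in (z,θ) contains the even operator g(z)θ∂_θ + h(z) and a nonzero odd operator T₁ = φθ∂_z + χ∂_θ + ωθ, with all supercommutators of these elements (and iterated ones) lying in a finite-dimensional space. If φ ≠ 0 or χ ≠ 0, then g must be constant. More concretely: [gθ∂_θ + h, φθ∂_z + χ∂_θ + ωθ] = gφ·θ∂_z − gχ·∂_θ + (gω + φh′)·θ, and if repeatedly bracketing with gθ∂_θ + h yields only finitely many linearly independent operators, and φ ≠ 0 (or χ ≠ 0), then g is constant. -/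
/-- An odd operator `φθ∂_z + χ∂_θ + ωθ` is recorded by its coefficient triple
`(φ, χ, ω)`. Bracketing with the even operator `gθ∂_θ + h` sends
`(φ, χ, ω) ↦ (gφ, −gχ, gω + φh′)`. -/
noncomputable def adE (g h : ℂ → ℂ) :
    ((ℂ → ℂ) × (ℂ → ℂ) × (ℂ → ℂ)) → ((ℂ → ℂ) × (ℂ → ℂ) × (ℂ → ℂ)) :=
  fun t => (g * t.1, -(g * t.2.1), g * t.2.2 + t.1 * deriv h)

open Set Polynomial
/-- Zero-product: if `f` is analytic on `ℂ`, `k` continuous, `f * k = 0` pointwise,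
and `f` is not identically zero, then `k = 0`. -/
lemma aux_zero_prod (f k : ℂ → ℂ) (hf : AnalyticOnNhd ℂ f Set.univ) (hk : Continuous k)
    (hmul : ∀ z, f z * k z = 0) (hf0 : f ≠ 0) : ∀ z, k z = 0 := by
  intro z
  by_contra hz
  have hev : ∀ᶠ w in nhds z, k w ≠ 0 := hk.continuousAt.eventually_ne hz
  have hfev : f =ᶠ[nhds z] 0 := by
    filter_upwards [hev] with w hw
    exact (mul_eq_zero.mp (hmul w)).resolve_right hw
  have := hf.eqOn_zero_of_preconnected_of_eventuallyEq_zero isPreconnected_univ (mem_univ z) hfev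
  exact hf0 (funext fun w => this (mem_univ w))

lemma aux_poly_const (g : ℂ → ℂ) (hg : AnalyticOnNhd ℂ g Set.univ) :
    ∀ n : ℕ, ∀ P : ℂ[X], P.natDegree ≤ n → P ≠ 0 → (∀ z, P.eval (g z) = 0) →
      ∃ c : ℂ, g = fun _ => c := by
  intro n
  induction n with
  | zero =>
      intro P hd hP0 hev
      exfalso
      have hc : P = C (P.coeff 0) := eq_C_of_natDegree_le_zero hd
      have := hev 0
      rw [hc] at this hP0
      simp at this
      simp [this] at hP0
  | succ n IH =>
      intro P hd hP0 hev
      by_cases hder : P.derivative = 0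
      · -- P constant
        exfalso
        have hd0 : P.natDegree = 0 := natDegree_eq_zero_of_derivative_eq_zero hder
        have hc : P = C (P.coeff 0) := eq_C_of_natDegree_le_zero hd0.le
        have := hev 0
        rw [hc] at this hP0
        simp at this
        simp [this] at hP0
      · have hgd : Differentiable ℂ g := fun x => (hg x (mem_univ x)).differentiableAt
        have hprod : ∀ z, P.derivative.eval (g z) * deriv g z = 0 := by
          intro z
          have h1 : HasDerivAt (fun w => P.eval (g w)) (P.derivative.eval (g z) * deriv g z) z :=
            (P.hasDerivAt (g z)).comp z (hgd z).hasDerivAt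
          have h2 : (fun w => P.eval (g w)) = fun _ => (0 : ℂ) := funext hev
          have h3 : HasDerivAt (fun w => P.eval (g w)) 0 z := by
            rw [h2]; exact hasDerivAt_const z 0
          exact h1.unique h3
        by_cases hu : (fun z => P.derivative.eval (g z)) = 0
        · -- apply IH to derivative
          have hnd : P.natDegree ≠ 0 := fun h => hder (by
            have : P = C (P.coeff 0) := eq_C_of_natDegree_le_zero h.le
            rw [this]; simp)
          have hlt : P.derivative.natDegree < P.natDegree := natDegree_derivative_lt hnd
          exact IH P.derivative (by omega) hder (fun z => congrFun hu z)
        · -- deriv g = 0 everywhere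
          have hU : AnalyticOnNhd ℂ (fun z => P.derivative.eval (g z)) Set.univ := by
            have := hg.aeval_polynomial P.derivative
            simpa using this
          have hkc : Continuous (deriv g) := by
            have : AnalyticOnNhd ℂ (deriv g) Set.univ := hg.deriv
            exact continuous_iff_continuousAt.mpr fun x => (this x (mem_univ x)).continuousAt
          have h0 : ∀ z, deriv g z = 0 := aux_zero_prod _ _ hU hkc hprod hu
          refine ⟨g 0, funext fun x => ?_⟩
          exact is_const_of_deriv_eq_zero hgd h0 x 0

/-- Key lemma: if the span of `{gⁿ·f}` is finite-dimensional and `f ≠ 0`, `g` is constant. -/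
lemma aux_key (g f : ℂ → ℂ) (hg : AnalyticOnNhd ℂ g Set.univ)
    (hf : AnalyticOnNhd ℂ f Set.univ) (hf0 : f ≠ 0)
    (hfd : FiniteDimensional ℂ ↥(Submodule.span ℂ (Set.range fun n : ℕ => g ^ n * f))) :
    ∃ c : ℂ, g = fun _ => c := by
  set v : ℕ → (ℂ → ℂ) := fun n => g ^ n * f with hv
  set M := Submodule.span ℂ (Set.range v) with hM
  have hdep : ¬ LinearIndependent ℂ v := by
    intro hli
    have hv' : ∀ n, v n ∈ M := fun n => Submodule.subset_span (Set.mem_range_self n)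
    let v' : ℕ → M := fun n => ⟨v n, hv' n⟩
    have : LinearIndependent ℂ v' := by
      apply LinearIndependent.of_comp M.subtype
      convert hli
      rfl
    exact Module.Finite.not_linearIndependent_of_infinite v' this
  rw [linearIndependent_iff'] at hdep
  push_neg at hdep
  obtain ⟨s, c, hsum, i₀, hi₀s, hi₀⟩ := hdep
  set P : ℂ[X] := s.sum fun i => C (c i) * X ^ i with hP
  have hPc : ∀ j, P.coeff j = if j ∈ s then c j else 0 := by
    intro j
    rw [hP, Polynomial.finset_sum_coeff]
    simp only [coeff_C_mul, coeff_X_pow]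
    rw [Finset.sum_congr rfl (fun i _ => by rw [mul_ite, mul_one, mul_zero])]
    simp [Finset.sum_ite_eq' s j c]
  have hP0 : P ≠ 0 := fun h => hi₀ (by
    have := hPc i₀; rw [h] at this; simp [hi₀s] at this; exact this.symm)
  have heval : ∀ z, f z * P.eval (g z) = 0 := by
    intro z
    have := congrFun hsum z
    simp only [Finset.sum_apply, Pi.smul_apply, Pi.mul_apply, Pi.pow_apply, smul_eq_mul,
      Pi.zero_apply, hv] at this
    rw [hP, Polynomial.eval_finset_sum]
    simp only [eval_mul, eval_C, eval_pow, eval_X]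
    rw [Finset.mul_sum]
    rw [← this]
    apply Finset.sum_congr rfl
    intro i _
    ring
  have hPg0 : ∀ z, P.eval (g z) = 0 := by
    apply aux_zero_prod f _ hf _ heval hf0
    have : AnalyticOnNhd ℂ (fun z => P.eval (g z)) Set.univ := by
      have := hg.aeval_polynomial P
      simpa using this
    exact continuous_iff_continuousAt.mpr fun x => (this x (mem_univ x)).continuousAt
  exact aux_poly_const g hg P.natDegree P le_rfl hP0 hPg0

/-- If the even operator `gθ∂_θ + h` belongs to a Lie superalgebra with a nonzero
odd operator `φθ∂_z + χ∂_θ + ωθ` (with `φ ≠ 0` or `χ ≠ 0`), and the iterated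
brackets with `gθ∂_θ + h` span a finite-dimensional space, then `g` is constant. -/
theorem stmt15 (g h φ χ ω : ℂ → ℂ)
    (hg : AnalyticOn ℂ g Set.univ) (hh : AnalyticOn ℂ h Set.univ)
    (hφ : AnalyticOn ℂ φ Set.univ) (hχ : AnalyticOn ℂ χ Set.univ)
    (hω : AnalyticOn ℂ ω Set.univ)
    (hfd : FiniteDimensional ℂ
      ↥(Submodule.span ℂ (Set.range fun n : ℕ => (adE g h)^[n] (φ, χ, ω))))
    (hnz : φ ≠ 0 ∨ χ ≠ 0) :
    ∃ cst : ℂ, g = fun _ => cst := by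
  rw [analyticOn_univ] at hg hφ hχ
  set w : ℕ → (ℂ → ℂ) × (ℂ → ℂ) × (ℂ → ℂ) := fun n => (adE g h)^[n] (φ, χ, ω) with hw
  haveI hfd' : FiniteDimensional ℂ ↥(Submodule.span ℂ (Set.range w)) := hfd
  have h1 : ∀ n, (w n).1 = g ^ n * φ := by
    intro n
    induction n with
    | zero => simp [hw]
    | succ n IH =>
        have : w (n+1) = adE g h (w n) := by
          simp [hw, Function.iterate_succ_apply']
        rw [this, adE, IH]
        ring
  have h2 : ∀ n, (w n).2.1 = (-1 : ℂ) ^ n • (g ^ n * χ) := by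
    intro n
    induction n with
    | zero => simp [hw]
    | succ n IH =>
        have : w (n+1) = adE g h (w n) := by
          simp [hw, Function.iterate_succ_apply']
        rw [this]
        show -(g * (w n).2.1) = _
        rw [IH]
        funext z
        simp [pow_succ]
        ring
  have hfd1 : ∀ (L : ((ℂ → ℂ) × (ℂ → ℂ) × (ℂ → ℂ)) →ₗ[ℂ] (ℂ → ℂ)),
      FiniteDimensional ℂ ↥(Submodule.span ℂ (Set.range fun n : ℕ => L (w n))) := by
    intro L
    have : (Set.range fun n : ℕ => L (w n)) = L '' Set.range w := by
      rw [← Set.range_comp]; rfl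
    rw [this, ← Submodule.map_span]
    exact Module.Finite.map _ L
  rcases hnz with hnz | hnz
  · -- use first coordinate
    have := hfd1 (LinearMap.fst ℂ (ℂ → ℂ) ((ℂ → ℂ) × (ℂ → ℂ)))
    simp only [LinearMap.fst_apply] at this
    apply aux_key g φ hg hφ hnz
    have heq : (fun n : ℕ => g ^ n * φ) = fun n : ℕ => (w n).1 := funext fun n => (h1 n).symm
    rw [heq]
    exact this
  · -- use second coordinate
    have := hfd1 ((LinearMap.fst ℂ (ℂ → ℂ) (ℂ → ℂ)).comp (LinearMap.snd ℂ (ℂ → ℂ) ((ℂ → ℂ) × (ℂ → ℂ))))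
    simp only [LinearMap.coe_comp, Function.comp_apply, LinearMap.snd_apply,
      LinearMap.fst_apply] at this
    apply aux_key g χ hg hχ hnz
    have hle : Submodule.span ℂ (Set.range fun n : ℕ => g ^ n * χ) ≤
        Submodule.span ℂ (Set.range fun n : ℕ => (w n).2.1) := by
      rw [Submodule.span_le]
      rintro x ⟨n, rfl⟩
      have hmem : (w n).2.1 ∈ Submodule.span ℂ (Set.range fun n : ℕ => (w n).2.1) :=
        Submodule.subset_span (Set.mem_range_self n)
      have : g ^ n * χ = (-1 : ℂ) ^ n • (w n).2.1 := by
        rw [h2 n, smul_smul, ← pow_add]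
        rw [Even.neg_one_pow ⟨n, rfl⟩, one_smul]
      show g ^ n * χ ∈ _
      rw [this]
      exact Submodule.smul_mem _ _ hmem
    haveI : FiniteDimensional ℂ ↥(Submodule.span ℂ (Set.range fun n : ℕ => (w n).2.1)) :=
      hfd1 ((LinearMap.fst ℂ (ℂ → ℂ) (ℂ → ℂ)).comp (LinearMap.snd ℂ (ℂ → ℂ) ((ℂ → ℂ) × (ℂ → ℂ))))
    exact Submodule.finiteDimensional_of_le hle
end
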